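/- Dual-extrema consensus convergence: Let G be a connected undirected graph on nodes {1,…,R} with each node adjacent to itself, and let H_1(0),…,H_R(0) ∈ ℝ^{M×N} satisfy the intrinsic-element assumption (for each entry position, all nonzero entries across the R matrices are equal). Define iteratively H_r(t+1)_{ij} = max(0, max_{j' ∈ N_r ∪ {r}} H_{j'}(t)_{ij}) + min(0, min_{j' ∈ N_r ∪ {r}} H_{j'}(t)_{ij}). Then there exists t* (at most the diameter of G) such that for all t ≥ t* and all nodes i, j: H_i(t) = H_j(t) = Q⁺(0) + Q⁻(0), where Q⁺(0) and Q⁻(0) are the global entrywise max-with-zero and min-with-zero of the initial matrices. -/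
import Mathlib


open Finset

/-- Entrywise `max(0, ·)`-fold over an index finset. -/
noncomputable def foldMax0 {α : Type*} (s : Finset α) (f : α → ℝ) : ℝ :=
  s.fold max 0 f

/-- Entrywise `min(0, ·)`-fold over an index finset. -/
noncomputable def foldMin0 {α : Type*} (s : Finset α) (f : α → ℝ) : ℝ :=
  s.fold min 0 f

lemma fold_zero {α : Type*} (s : Finset α) (f : α → ℝ)
    (h : ∀ x ∈ s, f x = 0) : foldMax0 s f + foldMin0 s f = 0 := by
  have h1 : foldMax0 s f = 0 := le_antisymm
    ((Finset.fold_max_le _).2 ⟨le_refl _, fun x hx => (h x hx).le⟩)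
    ((Finset.le_fold_max _).2 (Or.inl le_rfl))
  have h2 : foldMin0 s f = 0 := le_antisymm
    ((Finset.fold_min_le _).2 (Or.inl le_rfl))
    ((Finset.le_fold_min _).2 ⟨le_refl _, fun x hx => (h x hx).ge⟩)
  rw [h1, h2, add_zero]

lemma fold_v {α : Type*} (s : Finset α) (f : α → ℝ) (v : ℝ)
    (hf : ∀ x ∈ s, f x = 0 ∨ f x = v) {x : α} (hx : x ∈ s) (hxv : f x = v)
    (hv : v ≠ 0) : foldMax0 s f + foldMin0 s f = v := by
  rcases lt_or_gt_of_ne hv with hneg | hpos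
  · have h1 : foldMax0 s f = 0 := le_antisymm
      ((Finset.fold_max_le _).2 ⟨le_refl _, fun y hy => by
        rcases hf y hy with h | h <;> rw [h]; exact hneg.le⟩)
      ((Finset.le_fold_max _).2 (Or.inl le_rfl))
    have h2 : foldMin0 s f = v := le_antisymm
      ((Finset.fold_min_le _).2 (Or.inr ⟨x, hx, hxv.le⟩))
      ((Finset.le_fold_min _).2 ⟨hneg.le, fun y hy => by
        rcases hf y hy with h | h <;> rw [h]; exact hneg.le⟩)
    rw [h1, h2, zero_add]
  · have h1 : foldMax0 s f = v := le_antisymm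
      ((Finset.fold_max_le _).2 ⟨hpos.le, fun y hy => by
        rcases hf y hy with h | h <;> rw [h]; exact hpos.le⟩)
      ((Finset.le_fold_max _).2 (Or.inr ⟨x, hx, hxv.ge⟩))
    have h2 : foldMin0 s f = 0 := le_antisymm
      ((Finset.fold_min_le _).2 (Or.inl le_rfl))
      ((Finset.le_fold_min _).2 ⟨le_refl _, fun y hy => by
        rcases hf y hy with h | h <;> rw [h]; exact hpos.le⟩)
    rw [h1, h2, add_zero]

/-- Dual-extrema consensus convergence.  Let `G` be a connected graph on
`Fin R` (each node also uses its own value, i.e. self-loops), and let the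
initial matrices `H 0 r` satisfy the intrinsic-element assumption: at each
entry position all nonzero values across the `R` matrices coincide.
The iteration replaces each node's matrix by the entrywise
`max(0, neighborhood values) + min(0, neighborhood values)`.
Then after at most `G.diam` iterations every node's matrix equals
`Q⁺(0) + Q⁻(0)`, the global entrywise max-with-zero plus min-with-zero of
the initial matrices; in particular all nodes agree. -/
theorem dual_extrema_consensus {R M N : ℕ}
    (G : SimpleGraph (Fin R)) [DecidableRel G.Adj] (hconn : G.Connected)
    (H : ℕ → Fin R → Matrix (Fin M) (Fin N) ℝ)
    (hintr : ∀ i j, ∃ v : ℝ, ∀ r, H 0 r i j = 0 ∨ H 0 r i j = v)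
    (hstep : ∀ t r i j,
      H (t + 1) r i j =
        foldMax0 (Finset.univ.filter (fun j' => G.Adj r j' ∨ j' = r))
            (fun j' => H t j' i j)
          + foldMin0 (Finset.univ.filter (fun j' => G.Adj r j' ∨ j' = r))
            (fun j' => H t j' i j)) :
    ∃ tstar : ℕ, tstar ≤ G.diam ∧ ∀ t, tstar ≤ t → ∀ r i j,
      H t r i j =
        foldMax0 Finset.univ (fun r' => H 0 r' i j)
          + foldMin0 Finset.univ (fun r' => H 0 r' i j) := by
  have hne : Nonempty (Fin R) := hconn.nonempty
  have hediam : G.ediam ≠ ⊤ := by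
    obtain ⟨u, v, huv⟩ := SimpleGraph.exists_edist_eq_ediam_of_finite (G := G)
    rw [← huv]
    exact SimpleGraph.edist_ne_top_iff_reachable.2 (hconn u v)
  refine ⟨G.diam, le_refl _, fun t ht r i j => ?_⟩
  obtain ⟨v, hv⟩ := hintr i j
  by_cases hall : ∀ r', H 0 r' i j = 0
  · -- everything is zero forever
    have hz : ∀ t r, H t r i j = 0 := by
      intro t
      induction t with
      | zero => exact fun r => hall r
      | succ t ih =>
        intro r
        rw [hstep]
        exact fold_zero _ _ (fun x _ => ih x)
    rw [hz t r, fold_zero _ _ (fun x _ => hall x)]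
  · push_neg at hall
    obtain ⟨r0, hr0⟩ := hall
    have hr0v : H 0 r0 i j = v := (hv r0).resolve_left hr0
    have hvne : v ≠ 0 := hr0v ▸ hr0
    -- invariant: values stay in {0, v}
    have key : ∀ t r, H t r i j = 0 ∨ H t r i j = v := by
      intro t
      induction t with
      | zero => exact hv
      | succ t ih =>
        intro r
        rw [hstep]
        by_cases hex : ∃ x ∈ Finset.univ.filter (fun j' => G.Adj r j' ∨ j' = r),
            H t x i j = v
        · obtain ⟨x, hx, hxv⟩ := hex
          exact Or.inr (fold_v _ _ v (fun y _ => ih y) hx hxv hvne)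
        · push_neg at hex
          refine Or.inl (fold_zero _ _ (fun x hx => ?_))
          exact (ih x).resolve_right (hex x hx)
    -- spreading: within distance t of r0, value is v
    have spread : ∀ t r, G.dist r r0 ≤ t → H t r i j = v := by
      intro t
      induction t with
      | zero =>
        intro r hr
        have : r = r0 := (hconn.dist_eq_zero_iff).1 (Nat.le_zero.1 hr)
        rw [this, hr0v]
      | succ t ih =>
        intro r hr
        rcases Nat.lt_or_ge (G.dist r r0) (t + 1) with hlt | hge
        · have h1 : H t r i j = v := ih r (Nat.lt_succ_iff.1 hlt)
          rw [hstep]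
          refine fold_v _ _ v (fun y _ => key t y) ?_ h1 hvne
          simp
        · have hdist : G.dist r r0 = t + 1 := le_antisymm hr hge
          obtain ⟨p, hp⟩ := hconn.exists_walk_length_eq_dist r r0
          rw [hdist] at hp
          cases p with
          | nil => simp at hp
          | cons hadj q =>
            rename_i r'
            have hq : q.length = t := by
              simpa [SimpleGraph.Walk.length_cons] using hp
            have h1 : H t r' i j = v := ih r' (hq ▸ SimpleGraph.dist_le q)
            rw [hstep]
            refine fold_v _ _ v (fun y _ => key t y) ?_ h1 hvne
            simp [hadj]
    -- conclude
    have hQ : foldMax0 Finset.univ (fun r' => H 0 r' i j)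
        + foldMin0 Finset.univ (fun r' => H 0 r' i j) = v :=
      fold_v _ _ v (fun y _ => hv y) (Finset.mem_univ r0) hr0v hvne
    rw [hQ]
    exact spread t r (le_trans (SimpleGraph.dist_le_diam hediam) ht)
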